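/- arXiv:1506.00056 — 4 statements merged into one kernel-verified Lean document; each statement's English description precedes it below -/
import Mathlib

section
/- Let N ≥ 3 and let σ_N denote the (N−1)-dimensional surface measure of the unit sphere of ℝ^N. Let V : (0,∞) → [0,+∞] be measurable, let R₂ > 0 and γ∞ ≤ 2 be such that V(r) < +∞ for almost every r > R₂ and λ∞ := essinf_{r>R₂} r^{γ∞} V(r) > 0. Then every radially symmetric function u ∈ C¹(ℝ^N) with ∫_{ℝ^N} |∇u|² dx < ∞ and ∫_{ℝ^N} V(|x|) u(x)² dx < ∞ satisfies |u(x)| ≤ √(2/σ_N) · λ∞^{−1/4} · ‖u‖_V · |x|^{−(2(N−1)−γ∞)/4} for every x with |x| > R₂. -/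
/-!
Write `u(x) = w(|x|)`. In polar coordinates the two parts of `‖u‖_V²` bound one-dimensional
weighted integrals of the profile on `(R₂, ∞)`:
`σ_N ∫ w'² r^(N-1) ≤ ∫ |∇u|²` and `σ_N λ∞ ∫ w² r^(N-1-γ∞) ≤ ∫ V u²`.
With `β = N - 1 - γ∞/2 ≥ 0` and `c = √λ∞`, the function `F(r) = w(r)² r^β` satisfies
`F' ≥ 2 w w' r^β ≥ -(c⁻¹ w'² r^(N-1) + c w² r^(N-1-γ∞))` by AM-GM, so `F(r) ≤ F(s) + C` for
`R₂ < r ≤ s`, where `C` is the integral of the right-hand side. Since `γ∞ ≤ 2`,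
`F(s)/s ≤ w(s)² s^(N-1-γ∞)` for `s ≥ 1`, so `F(s)/s` is integrable at infinity and `F` cannot
stay away from `0`; hence `F(r) ≤ C`.
-/

open MeasureTheory Filter Set
open scoped ENNReal

/-- `σ_N`, the (N−1)-dimensional surface measure of the unit sphere of `ℝ^N`,
equals `N` times the Lebesgue volume of the unit ball. -/
noncomputable def sphereSurfaceMeasure (N : ℕ) : ℝ :=
  (N : ℝ) * (volume (Metric.ball (0 : EuclideanSpace ℝ (Fin N)) 1)).toReal

open Metric Module

theorem integrable_and_toReal_mul_integral_le {α : Type*} [MeasurableSpace α] {μ : Measure α}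
    {g : α → ℝ} (hg : AEStronglyMeasurable g μ) (hg₀ : 0 ≤ᵐ[μ] g) {K B : ℝ≥0∞} (hK : K ≠ 0)
    (hB : B ≠ ⊤) (h : K * ∫⁻ x, ENNReal.ofReal (g x) ∂μ ≤ B) :
    Integrable g μ ∧ K.toReal * ∫ x, g x ∂μ ≤ B.toReal := by
  have hfin : ∫⁻ x, ENNReal.ofReal (g x) ∂μ ≠ ⊤ := fun htop ↦ by
    rw [htop, ENNReal.mul_top hK] at h
    exact hB (top_le_iff.1 h)
  refine ⟨⟨hg, (hasFiniteIntegral_iff_ofReal hg₀).2 hfin.lt_top⟩, ?_⟩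
  rw [integral_eq_lintegral_of_nonneg_ae hg₀ hg, ← ENNReal.toReal_mul]
  exact ENNReal.toReal_mono hB h

theorem essInf_ne_top_of_ae_lt_top {α : Type*} [MeasurableSpace α] {μ : Measure α} (hμ : μ ≠ 0)
    {f : α → ℝ≥0∞} (hf : ∀ᵐ x ∂μ, f x < ⊤) : essInf f μ ≠ ⊤ := by
  have : (ae μ).NeBot := ae_neBot.2 hμ
  obtain ⟨x, hle, hlt⟩ := (Eventually.and (ae_essInf_le (f := f)) hf).exists
  exact (hle.trans_lt hlt).ne

theorem sq_mul_rpow_nonneg_ae_restrict_Ioi {f : ℝ → ℝ} {R p : ℝ} (hR : 0 ≤ R) :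
    0 ≤ᵐ[volume.restrict (Ioi R)] fun t ↦ f t ^ 2 * t ^ p :=
  ae_restrict_of_forall_mem measurableSet_Ioi fun t (ht : R < t) ↦
    mul_nonneg (sq_nonneg _) (Real.rpow_nonneg (hR.trans ht.le) _)

theorem finrank_mul_measure_ball_ne_zero {E : Type*} [NormedAddCommGroup E] [NormedSpace ℝ E]
    [MeasurableSpace E] [FiniteDimensional ℝ E] [Nontrivial E] (μ : Measure E)
    [μ.IsOpenPosMeasure] : (finrank ℝ E : ℝ≥0∞) * μ (ball 0 1) ≠ 0 :=
  mul_ne_zero (Nat.cast_ne_zero.2 finrank_pos.ne') (measure_ball_pos μ 0 one_pos).ne'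

section Polar

variable {E : Type*} [NormedAddCommGroup E] [NormedSpace ℝ E] [MeasurableSpace E] [BorelSpace E]
  [FiniteDimensional ℝ E] [Nontrivial E] (μ : Measure E) [μ.IsAddHaarMeasure]

theorem lintegral_fun_norm_addHaar {f : ℝ → ℝ≥0∞} (hf : Measurable f) :
    ∫⁻ x, f ‖x‖ ∂μ = finrank ℝ E * μ (ball 0 1) *
      ∫⁻ y in Ioi (0 : ℝ), ENNReal.ofReal (y ^ ((finrank ℝ E : ℝ) - 1)) * f y := by
  calc
    ∫⁻ x, f ‖x‖ ∂μ = ∫⁻ x : ({(0)}ᶜ : Set E), f ‖x.1‖ ∂(μ.comap (↑)) := by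
      rw [lintegral_subtype_comap (measurableSet_singleton _).compl fun x ↦ f ‖x‖,
        restrict_compl_singleton]
    _ = ∫⁻ x : sphere (0 : E) 1 × Ioi (0 : ℝ), f x.2
        ∂μ.toSphere.prod (.volumeIoiPow (finrank ℝ E - 1)) := by
      rw [← μ.measurePreserving_homeomorphUnitSphereProd.lintegral_comp_emb
        (Homeomorph.measurableEmbedding _) fun p ↦ f p.2]
      simp
    _ = μ.toSphere univ * ∫⁻ y : Ioi (0 : ℝ), f y ∂(.volumeIoiPow (finrank ℝ E - 1)) := by
      rw [lintegral_prod (fun p : sphere (0 : E) 1 × Ioi (0 : ℝ) ↦ f p.2)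
        (hf.comp (measurable_subtype_coe.comp measurable_snd)).aemeasurable]
      simp [lintegral_const, mul_comm]
    _ = _ := by
      rw [μ.toSphere_apply_univ, Measure.volumeIoiPow, lintegral_withDensity_eq_lintegral_mul _
        (by fun_prop) (g := fun y : Ioi (0 : ℝ) ↦ f y) (by fun_prop),
        ← lintegral_subtype_comap measurableSet_Ioi
          fun y ↦ ENNReal.ofReal (y ^ ((finrank ℝ E : ℝ) - 1)) * f y]
      congr 1
      refine lintegral_congr fun y ↦ ?_
      have hd : 1 ≤ finrank ℝ E := Module.finrank_pos
      simp [← Real.rpow_natCast, Nat.cast_sub hd]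

theorem mul_setLIntegral_Ioi_le_lintegral_fun_norm {f : ℝ → ℝ≥0∞} (hf : Measurable f) {R : ℝ}
    (hR : 0 ≤ R) :
    finrank ℝ E * μ (ball 0 1) *
        ∫⁻ y in Ioi R, ENNReal.ofReal (y ^ ((finrank ℝ E : ℝ) - 1)) * f y ≤
      ∫⁻ x, f ‖x‖ ∂μ := by
  rw [lintegral_fun_norm_addHaar μ hf]
  gcongr

theorem integrableOn_and_mul_setIntegral_sq_deriv_le {u : E → ℝ} {w : ℝ → ℝ}
    (hgrad : Integrable (fun x ↦ ‖fderiv ℝ u x‖ ^ 2) μ)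
    (hw : ∀ x, |deriv w ‖x‖| ≤ ‖fderiv ℝ u x‖) {R : ℝ} (hR : 0 ≤ R) :
    IntegrableOn (fun t ↦ deriv w t ^ 2 * t ^ ((finrank ℝ E : ℝ) - 1)) (Ioi R) ∧
      finrank ℝ E * μ.real (ball 0 1) *
          ∫ t in Ioi R, deriv w t ^ 2 * t ^ ((finrank ℝ E : ℝ) - 1) ≤
        ∫ x, ‖fderiv ℝ u x‖ ^ 2 ∂μ := by
  have hle : finrank ℝ E * μ (ball 0 1) *
      ∫⁻ t in Ioi R, ENNReal.ofReal (deriv w t ^ 2 * t ^ ((finrank ℝ E : ℝ) - 1)) ≤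
        ENNReal.ofReal (∫ x, ‖fderiv ℝ u x‖ ^ 2 ∂μ) := calc
    _ = finrank ℝ E * μ (ball 0 1) * ∫⁻ t in Ioi R,
          ENNReal.ofReal (t ^ ((finrank ℝ E : ℝ) - 1)) * ENNReal.ofReal (deriv w t ^ 2) := by
      refine congrArg _ (setLIntegral_congr_fun measurableSet_Ioi fun t (ht : R < t) ↦ ?_)
      rw [← ENNReal.ofReal_mul (Real.rpow_nonneg (hR.trans ht.le) _), mul_comm]
    _ ≤ ∫⁻ x, ENNReal.ofReal (deriv w ‖x‖ ^ 2) ∂μ :=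
      mul_setLIntegral_Ioi_le_lintegral_fun_norm μ (by fun_prop) hR
    _ ≤ ∫⁻ x, ENNReal.ofReal (‖fderiv ℝ u x‖ ^ 2) ∂μ := by
      refine lintegral_mono fun x ↦ ENNReal.ofReal_le_ofReal ?_
      exact sq_le_sq' (abs_le.1 (hw x)).1 (abs_le.1 (hw x)).2
    _ = _ := (ofReal_integral_eq_lintegral_ofReal hgrad (ae_of_all _ fun _ ↦ sq_nonneg _)).symm
  have hreal := integrable_and_toReal_mul_integral_le (by fun_prop)
    (sq_mul_rpow_nonneg_ae_restrict_Ioi hR)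
    (finrank_mul_measure_ball_ne_zero μ) ENNReal.ofReal_ne_top hle
  rwa [ENNReal.toReal_mul, ENNReal.toReal_natCast,
    ENNReal.toReal_ofReal (integral_nonneg fun _ ↦ sq_nonneg _)] at hreal

theorem integrableOn_and_mul_setIntegral_sq_le_lintegral_potential {V : ℝ → ℝ≥0∞}
    (hV : Measurable V) {u : E → ℝ} {w : ℝ → ℝ} (hw : Measurable w) (hu : ∀ x, u x = w ‖x‖)
    {lam : ℝ≥0∞} {R γ : ℝ} (hR : 0 ≤ R)
    (hlam : ∀ᵐ t ∂volume.restrict (Ioi R), lam ≤ ENNReal.ofReal (t ^ γ) * V t) (hlam₀ : lam ≠ 0)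
    (hVu : ∫⁻ x, V ‖x‖ * ENNReal.ofReal (u x ^ 2) ∂μ ≠ ⊤) :
    IntegrableOn (fun t ↦ w t ^ 2 * t ^ ((finrank ℝ E : ℝ) - 1 - γ)) (Ioi R) ∧
      finrank ℝ E * μ.real (ball 0 1) * lam.toReal *
          ∫ t in Ioi R, w t ^ 2 * t ^ ((finrank ℝ E : ℝ) - 1 - γ) ≤
        (∫⁻ x, V ‖x‖ * ENNReal.ofReal (u x ^ 2) ∂μ).toReal := by
  have hle : finrank ℝ E * μ (ball 0 1) * lam *
      ∫⁻ t in Ioi R, ENNReal.ofReal (w t ^ 2 * t ^ ((finrank ℝ E : ℝ) - 1 - γ)) ≤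
        ∫⁻ x, V ‖x‖ * ENNReal.ofReal (u x ^ 2) ∂μ := by
    simp_rw [hu]
    calc
      _ = finrank ℝ E * μ (ball 0 1) * ∫⁻ t in Ioi R,
            lam * ENNReal.ofReal (w t ^ 2 * t ^ ((finrank ℝ E : ℝ) - 1 - γ)) := by
        rw [mul_assoc, lintegral_const_mul _ (by fun_prop)]
      _ ≤ finrank ℝ E * μ (ball 0 1) * ∫⁻ t in Ioi R,
            ENNReal.ofReal (t ^ ((finrank ℝ E : ℝ) - 1)) * (V t * ENNReal.ofReal (w t ^ 2)) := by
        refine mul_le_mul_right (lintegral_mono_ae ?_) _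
        filter_upwards [hlam, ae_restrict_mem measurableSet_Ioi] with t hlamt (ht : R < t)
        have ht₀ : 0 < t := hR.trans_lt ht
        calc
          _ ≤ ENNReal.ofReal (t ^ γ) * V t *
                ENNReal.ofReal (w t ^ 2 * t ^ ((finrank ℝ E : ℝ) - 1 - γ)) := by gcongr
          _ = _ := by
            rw [mul_right_comm, ← ENNReal.ofReal_mul (by positivity), mul_left_comm,
              ← Real.rpow_add ht₀, add_sub_cancel, mul_comm (V t), mul_comm (w t ^ 2),
              ENNReal.ofReal_mul (by positivity), mul_assoc]
      _ ≤ _ := mul_setLIntegral_Ioi_le_lintegral_fun_norm μ (by fun_prop) hR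
  have hreal := integrable_and_toReal_mul_integral_le (by fun_prop)
    (sq_mul_rpow_nonneg_ae_restrict_Ioi hR)
    (mul_ne_zero (finrank_mul_measure_ball_ne_zero μ) hlam₀) hVu hle
  rwa [ENNReal.toReal_mul, ENNReal.toReal_mul, ENNReal.toReal_natCast] at hreal

end Polar

section Radial

variable {E : Type*} [NormedAddCommGroup E] [NormedSpace ℝ E] {u : E → ℝ} {w : ℝ → ℝ}

theorem hasDerivAt_comp_smul {v : E} {r : ℝ} (hu : DifferentiableAt ℝ u (r • v)) :
    HasDerivAt (fun t : ℝ ↦ u (t • v)) (fderiv ℝ u (r • v) v) r := by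
  have hray : HasDerivAt (fun t : ℝ ↦ t • v) v r := by
    simpa using (hasDerivAt_id r).smul_const v
  exact hu.hasFDerivAt.comp_hasDerivAt r hray

theorem abs_deriv_le_norm_fderiv_of_forall_eq_comp_norm (h : ∀ y, u y = w ‖y‖) {x : E}
    (hx : x ≠ 0) (hu : DifferentiableAt ℝ u x) : |deriv w ‖x‖| ≤ ‖fderiv ℝ u x‖ := by
  have hx₀ : 0 < ‖x‖ := norm_pos_iff.2 hx
  have hv : ‖‖x‖⁻¹ • x‖ = 1 := by rw [norm_smul, norm_inv, norm_norm, inv_mul_cancel₀ hx₀.ne']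
  have hxv : ‖x‖ • ‖x‖⁻¹ • x = x := smul_inv_smul₀ hx₀.ne' x
  have hline := hasDerivAt_comp_smul (v := ‖x‖⁻¹ • x) (hxv.symm ▸ hu)
  have hw : HasDerivAt w (fderiv ℝ u x (‖x‖⁻¹ • x)) ‖x‖ := by
    rw [hxv] at hline
    refine hline.congr_of_eventuallyEq ?_
    filter_upwards [eventually_gt_nhds hx₀] with t ht
    rw [h, norm_smul, hv, mul_one, Real.norm_of_nonneg ht.le]
  rw [hw.deriv, ← Real.norm_eq_abs]
  simpa [hv] using (fderiv ℝ u x).le_opNorm (‖x‖⁻¹ • x)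

theorem exists_contDiff_profile [Nontrivial E] (hu : ContDiff ℝ 1 u)
    (hrad : ∃ w : ℝ → ℝ, ∀ x, u x = w ‖x‖) :
    ∃ w : ℝ → ℝ, ContDiff ℝ 1 w ∧ (∀ x, u x = w ‖x‖) ∧
      ∀ x, |deriv w ‖x‖| ≤ ‖fderiv ℝ u x‖ := by
  obtain ⟨w, hw⟩ := hrad
  obtain ⟨e, he⟩ := exists_norm_eq E zero_le_one
  have hprofile : ∀ x, u x = u (‖x‖ • e) := fun x ↦ by
    rw [hw, hw (‖x‖ • e), norm_smul, he, mul_one, norm_norm]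
  have hdiff : Differentiable ℝ u := hu.differentiable one_ne_zero
  refine ⟨fun t ↦ u (t • e), hu.comp (contDiff_id.smul contDiff_const), hprofile, fun x ↦ ?_⟩
  rcases eq_or_ne x 0 with rfl | hx
  · have hline := hasDerivAt_comp_smul (hdiff ((0 : ℝ) • e))
    rw [zero_smul] at hline
    rw [norm_zero, hline.deriv, ← Real.norm_eq_abs]
    simpa [he] using (fderiv ℝ u 0).le_opNorm e
  · exact abs_deriv_le_norm_fderiv_of_forall_eq_comp_norm hprofile hx (hdiff x)

end Radial

theorem two_mul_le_inv_mul_sq_add_mul_sq {a b c : ℝ} (hc : 0 < c) :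
    2 * (a * b) ≤ c⁻¹ * a ^ 2 + c * b ^ 2 := by
  have hsq : c⁻¹ * a ^ 2 + c * b ^ 2 - 2 * (a * b) = c⁻¹ * (a - c * b) ^ 2 := by
    field_simp
    ring
  linarith [mul_nonneg (inv_nonneg.2 hc.le) (sq_nonneg (a - c * b))]

theorem two_mul_abs_mul_rpow_le {x y t p q c : ℝ} (ht : 0 < t) (hc : 0 < c) :
    2 * |x * y| * t ^ ((p + q) / 2) ≤ c⁻¹ * (y ^ 2 * t ^ p) + c * (x ^ 2 * t ^ q) := by
  have hsq : ∀ s : ℝ, (t ^ (s / 2)) ^ 2 = t ^ s := fun s ↦ by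
    rw [← Real.rpow_natCast, ← Real.rpow_mul ht.le]
    norm_num
  have hsplit : t ^ ((p + q) / 2) = t ^ (p / 2) * t ^ (q / 2) := by
    rw [← Real.rpow_add ht, add_div]
  have hamgm :=
    two_mul_le_inv_mul_sq_add_mul_sq (a := |y| * t ^ (p / 2)) (b := |x| * t ^ (q / 2)) hc
  rw [mul_pow, mul_pow, sq_abs, sq_abs, hsq, hsq] at hamgm
  rw [hsplit, abs_mul]
  linarith

theorem frequently_lt_of_integrableOn_mul_inv {f : ℝ → ℝ} {a : ℝ}
    (hf : IntegrableOn (fun t ↦ f t * t⁻¹) (Ioi a)) {ε : ℝ} (hε : 0 < ε) :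
    ∃ᶠ t in atTop, f t < ε := by
  intro hge
  obtain ⟨b, hb⟩ := eventually_atTop.1 (hge.mono fun t ht ↦ not_lt.1 ht)
  set b' := max (max a b) 1
  have hinv : IntegrableOn (fun t : ℝ ↦ ε * t⁻¹) (Ioi b') := by
    refine Integrable.mono' (hf.mono_set (Ioi_subset_Ioi ((le_max_left _ _).trans
      (le_max_left _ _)))) (by fun_prop) ?_
    filter_upwards [ae_restrict_mem measurableSet_Ioi] with t ht
    have ht₀ : 0 < t := zero_lt_one.trans_le (le_max_right _ _) |>.trans ht
    rw [Real.norm_of_nonneg (by positivity)]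
    exact mul_le_mul_of_nonneg_right (hb t ((le_max_right _ _).trans
      (le_max_left _ _) |>.trans ht.le)) (inv_nonneg.2 ht₀.le)
  have hinv' := hinv.const_mul ε⁻¹
  simp only [← mul_assoc, inv_mul_cancel₀ hε.ne', one_mul] at hinv'
  exact not_integrableOn_Ioi_inv hinv'

theorem le_add_setIntegral_Ioi_of_hasDerivAt {F F' G : ℝ → ℝ} {a r s : ℝ} (har : a < r)
    (hrs : r ≤ s) (hF : ∀ t ∈ Icc r s, HasDerivAt F (F' t) t) (hG : IntegrableOn G (Ioi a))
    (hG₀ : ∀ t ∈ Ioi a, 0 ≤ G t) (hFG : ∀ t ∈ Ioo r s, -G t ≤ F' t) :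
    F r ≤ F s + ∫ t in Ioi a, G t := by
  have hsub : Icc r s ⊆ Ioi a := fun t ht ↦ har.trans_le ht.1
  have hftc : -F s - -F r ≤ ∫ t in r..s, G t :=
    intervalIntegral.sub_le_integral_of_hasDeriv_right_of_le hrs
      (fun t ht ↦ (hF t ht).continuousAt.continuousWithinAt.neg)
      (fun t ht ↦ (hF t (Ioo_subset_Icc_self ht)).neg.hasDerivWithinAt)
      (hG.mono_set hsub) (fun t ht ↦ neg_le.1 (hFG t ht))
  have hmono : ∫ t in r..s, G t ≤ ∫ t in Ioi a, G t := by
    rw [intervalIntegral.integral_of_le hrs]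
    exact setIntegral_mono_set hG (ae_restrict_of_forall_mem measurableSet_Ioi hG₀)
      (Ioc_subset_Icc_self.trans hsub).eventuallyLE
  linarith

theorem sq_mul_rpow_le_of_integrableOn {w : ℝ → ℝ} (hw : ContDiff ℝ 1 w) {R p q c r : ℝ}
    (hR : 0 ≤ R) (hpq : 0 ≤ p + q) (hqp : p ≤ q + 2) (hc : 0 < c)
    (h₁ : IntegrableOn (fun t ↦ deriv w t ^ 2 * t ^ p) (Ioi R))
    (h₂ : IntegrableOn (fun t ↦ w t ^ 2 * t ^ q) (Ioi R)) (hr : R < r) :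
    w r ^ 2 * r ^ ((p + q) / 2) ≤
      c⁻¹ * (∫ t in Ioi R, deriv w t ^ 2 * t ^ p) + c * ∫ t in Ioi R, w t ^ 2 * t ^ q := by
  set β := (p + q) / 2
  set G := fun t ↦ c⁻¹ * (deriv w t ^ 2 * t ^ p) + c * (w t ^ 2 * t ^ q)
  have hG : IntegrableOn G (Ioi R) := (h₁.const_mul _).add (h₂.const_mul _)
  have hG₀ : ∀ t ∈ Ioi R, 0 ≤ G t := fun t (ht : R < t) ↦ by
    have := hR.trans_lt ht
    positivity
  have hF : ∀ t, 0 < t → HasDerivAt (fun t ↦ w t ^ 2 * t ^ β)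
      (2 * w t * deriv w t * t ^ β + w t ^ 2 * (β * t ^ (β - 1))) t := fun t ht ↦ by
    have hsq : HasDerivAt (fun s ↦ w s ^ 2) ((2 : ℕ) * w t ^ (2 - 1) * deriv w t) t :=
      ((hw.differentiable one_ne_zero) t).hasDerivAt.pow 2
    norm_num at hsq
    exact hsq.mul (Real.hasDerivAt_rpow_const (Or.inl ht.ne'))
  have hFG : ∀ t, 0 < t →
      -G t ≤ 2 * w t * deriv w t * t ^ β + w t ^ 2 * (β * t ^ (β - 1)) := fun t ht ↦ by
    have hamgm := two_mul_abs_mul_rpow_le (x := w t) (y := deriv w t) (p := p) (q := q) ht hc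
    have habs := neg_abs_le (w t * deriv w t)
    have hβ : 0 ≤ w t ^ 2 * (β * t ^ (β - 1)) := by positivity
    nlinarith [Real.rpow_nonneg ht.le β]
  have hstep : ∀ s, r ≤ s → w r ^ 2 * r ^ β ≤ w s ^ 2 * s ^ β + ∫ t in Ioi R, G t :=
    fun s hs ↦ le_add_setIntegral_Ioi_of_hasDerivAt hr hs
      (fun t ht ↦ hF t (hR.trans_lt (hr.trans_le ht.1))) hG hG₀
      (fun t ht ↦ hFG t (hR.trans_lt (hr.trans ht.1)))
  have hβq : β - 1 ≤ q := by simp only [β]; linarith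
  have hdecay : IntegrableOn (fun t ↦ w t ^ 2 * t ^ β * t⁻¹) (Ioi (max R 1)) := by
    refine Integrable.mono' (h₂.mono_set (Ioi_subset_Ioi (le_max_left _ _))) ?_ ?_
    · have := hw.continuous
      fun_prop
    · filter_upwards [ae_restrict_mem measurableSet_Ioi] with t (ht : max R 1 < t)
      have ht₁ : 1 < t := (le_max_right _ _).trans_lt ht
      have ht₀ : 0 < t := one_pos.trans ht₁
      rw [Real.norm_of_nonneg (by positivity), mul_assoc, ← Real.rpow_neg_one,
        ← Real.rpow_add ht₀]
      exact mul_le_mul_of_nonneg_left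
        (Real.rpow_le_rpow_of_exponent_le ht₁.le (by linarith)) (sq_nonneg _)
  have hbound : w r ^ 2 * r ^ β ≤ ∫ t in Ioi R, G t := by
    refine le_of_forall_pos_lt_add fun ε hε ↦ ?_
    obtain ⟨s, hs, hrs⟩ := ((frequently_lt_of_integrableOn_mul_inv hdecay hε).and_eventually
      (eventually_ge_atTop r)).exists
    linarith [hstep s hrs]
  rwa [integral_add (h₁.const_mul _) (h₂.const_mul _), integral_const_mul,
    integral_const_mul] at hbound

theorem abs_le_of_sq_mul_rpow_le {a r β σ lam A B D T : ℝ} (hr : 0 < r) (hσ : 0 < σ)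
    (hlam : 0 < lam) (h : a ^ 2 * r ^ β ≤ (√lam)⁻¹ * A + √lam * B) (hA : σ * A ≤ D)
    (hB : σ * lam * B ≤ T) :
    |a| ≤ √(2 / σ) * lam ^ (-(1 / 4 : ℝ)) * √(D + T) * r ^ (-β / 2) := by
  have hsl : 0 < √lam := Real.sqrt_pos.2 hlam
  have hrβ : 0 < r ^ β := Real.rpow_pos_of_pos hr β
  have hsum : σ * √lam * (a ^ 2 * r ^ β) ≤ D + T := calc
    _ ≤ σ * √lam * ((√lam)⁻¹ * A + √lam * B) := by gcongr
    _ = σ * A + σ * lam * B := by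
      field_simp
      rw [Real.sq_sqrt hlam.le]
      ring
    _ ≤ D + T := add_le_add hA hB
  have hDT : 0 ≤ D + T := le_trans (by positivity) hsum
  refine abs_le_of_sq_le_sq ?_ (by positivity)
  have hrpow_sq : ∀ x y : ℝ, 0 < x → (x ^ y) ^ 2 = x ^ (2 * y) := fun x y hx ↦ by
    rw [← Real.rpow_natCast, ← Real.rpow_mul hx.le, mul_comm]
    norm_num
  rw [mul_pow, mul_pow, mul_pow, Real.sq_sqrt (by positivity), Real.sq_sqrt hDT,
    hrpow_sq _ _ hlam, hrpow_sq _ _ hr, show 2 * -(1 / 4 : ℝ) = -(1 / 2) by norm_num,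
    show 2 * (-β / 2) = -β by ring, Real.rpow_neg hlam.le, Real.rpow_neg hr.le,
    ← Real.sqrt_eq_rpow,
    show 2 / σ * (√lam)⁻¹ * (D + T) * (r ^ β)⁻¹ = 2 * (D + T) / (σ * √lam * r ^ β) by field_simp,
    le_div_iff₀ (by positivity)]
  nlinarith [sq_nonneg a]

theorem sphereSurfaceMeasure_pos {N : ℕ} (hN : 0 < N) : 0 < sphereSurfaceMeasure N :=
  mul_pos (Nat.cast_pos.2 hN)
    (ENNReal.toReal_pos (measure_ball_pos _ _ one_pos).ne' measure_ball_lt_top.ne)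

theorem radial_estimate_at_infinity
    (N : ℕ) (hN : 3 ≤ N)
    (V : ℝ → ℝ≥0∞) (hVmeas : Measurable V)
    (R₂ γ : ℝ) (hR₂ : 0 < R₂) (hγ : γ ≤ 2)
    (hVfin : ∀ᵐ r ∂(volume.restrict (Set.Ioi R₂)), V r < ⊤)
    (lam : ℝ≥0∞)
    (hlam : lam = essInf (fun r : ℝ => ENNReal.ofReal (r ^ γ) * V r)
      (volume.restrict (Set.Ioi R₂)))
    (hlampos : 0 < lam)
    (u : EuclideanSpace ℝ (Fin N) → ℝ) (hu : ContDiff ℝ 1 u)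
    (hrad : ∃ w : ℝ → ℝ, ∀ x, u x = w ‖x‖)
    (hgrad : Integrable (fun x : EuclideanSpace ℝ (Fin N) => ‖fderiv ℝ u x‖ ^ 2))
    (hVu : (∫⁻ x : EuclideanSpace ℝ (Fin N), V ‖x‖ * ENNReal.ofReal ((u x) ^ 2)) < ⊤) :
    ∀ x : EuclideanSpace ℝ (Fin N), R₂ < ‖x‖ →
      |u x| ≤ Real.sqrt (2 / sphereSurfaceMeasure N) * lam.toReal ^ (-(1 / 4 : ℝ)) *
        Real.sqrt ((∫ x : EuclideanSpace ℝ (Fin N), ‖fderiv ℝ u x‖ ^ 2) +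
          (∫⁻ x : EuclideanSpace ℝ (Fin N), V ‖x‖ * ENNReal.ofReal ((u x) ^ 2)).toReal) *
        ‖x‖ ^ (-(2 * ((N : ℝ) - 1) - γ) / 4) := by
  intro x hx
  have hdim : finrank ℝ (EuclideanSpace ℝ (Fin N)) = N := finrank_euclideanSpace_fin
  have : Nontrivial (EuclideanSpace ℝ (Fin N)) :=
    Module.nontrivial_of_finrank_pos (R := ℝ) (by omega)
  have hσ : finrank ℝ (EuclideanSpace ℝ (Fin N)) *
      volume.real (ball (0 : EuclideanSpace ℝ (Fin N)) 1) = sphereSurfaceMeasure N := by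
    rw [hdim]; rfl
  obtain ⟨w, hw, hux, hderiv⟩ := exists_contDiff_profile hu hrad
  have hlam_top : lam ≠ ⊤ := hlam ▸ essInf_ne_top_of_ae_lt_top (by simp [Real.volume_Ioi])
    (hVfin.mono fun t ht ↦ ENNReal.mul_lt_top ENNReal.ofReal_lt_top ht)
  obtain ⟨hint₁, hA₁⟩ :=
    integrableOn_and_mul_setIntegral_sq_deriv_le volume hgrad hderiv hR₂.le
  obtain ⟨hint₂, hA₂⟩ := integrableOn_and_mul_setIntegral_sq_le_lintegral_potential volume hVmeas
    hw.continuous.measurable hux hR₂.le (hlam ▸ ae_essInf_le) hlampos.ne' hVu.ne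
  rw [hσ, hdim] at hA₁ hA₂
  rw [hdim] at hint₁ hint₂
  have hN' : (3 : ℝ) ≤ N := by exact_mod_cast hN
  have hlam_pos : 0 < lam.toReal := ENNReal.toReal_pos hlampos.ne' hlam_top
  have hbound := sq_mul_rpow_le_of_integrableOn (p := N - 1) (q := N - 1 - γ) hw hR₂.le
    (by linarith) (by linarith) (Real.sqrt_pos.2 hlam_pos) hint₁ hint₂ hx
  rw [hux x, show -(2 * ((N : ℝ) - 1) - γ) / 4 = -((N - 1 + (N - 1 - γ)) / 2) / 2 by ring]
  exact abs_le_of_sq_mul_rpow_le (hR₂.trans hx) (sphereSurfaceMeasure_pos (by omega)) hlam_pos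
    hbound hA₁ hA₂
end

section
/- (Ni's Radial Lemma.) Let N ≥ 3. There exists a constant c_N > 0, depending only on N, such that every radially symmetric function u ∈ C_c^∞(ℝ^N) satisfies |u(x)| ≤ c_N · ( ∫_{ℝ^N} |∇u|² dx )^{1/2} · |x|^{−(N−2)/2} for every x ≠ 0. -/
open MeasureTheory

open Metric Set Filter in
theorem ni_radial_lemma (N : ℕ) (hN : 3 ≤ N) :
    ∃ c : ℝ, 0 < c ∧ ∀ u : EuclideanSpace ℝ (Fin N) → ℝ,
      ContDiff ℝ (⊤ : ℕ∞) u → HasCompactSupport u → (∃ w : ℝ → ℝ, ∀ x, u x = w ‖x‖) →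
      ∀ x : EuclideanSpace ℝ (Fin N), x ≠ 0 →
        |u x| ≤ c * Real.sqrt (∫ y : EuclideanSpace ℝ (Fin N), ‖fderiv ℝ u y‖ ^ 2) *
          ‖x‖ ^ (-((N : ℝ) - 2) / 2) := by
  haveI : Nonempty (Fin N) := ⟨⟨0, by omega⟩⟩
  have hN2 : (2 : ℝ) < (N : ℝ) := by exact_mod_cast (by omega : 2 < N)
  set vb : ℝ := (volume (ball (0 : EuclideanSpace ℝ (Fin N)) 1)).toReal with hvb
  have hvbpos : 0 < vb :=
    ENNReal.toReal_pos (measure_ball_pos _ _ one_pos).ne' measure_ball_lt_top.ne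
  set ω : ℝ := (N : ℝ) * vb with hω
  have hωpos : 0 < ω := by positivity
  refine ⟨Real.sqrt (ω * ((N : ℝ) - 2))⁻¹, Real.sqrt_pos.2 (inv_pos.2 (mul_pos hωpos (by linarith))), ?_⟩
  intro u hu husupp hrad x hx
  obtain ⟨w, hw⟩ := hrad
  set e : EuclideanSpace ℝ (Fin N) := EuclideanSpace.single ⟨0, by omega⟩ (1 : ℝ) with he
  have hne : ‖e‖ = 1 := by simp [he, EuclideanSpace.norm_single]
  set g : ℝ → ℝ := fun t => u (t • e) with hg
  have hudiff : Differentiable ℝ u := hu.differentiable (by simp)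
  have hgc : ContDiff ℝ (⊤ : ℕ∞) g := hu.comp (contDiff_id.smul contDiff_const)
  have hiso : Isometry (fun t : ℝ => t • e) := by
    intro t s
    simp only [edist_dist, dist_eq_norm, ← sub_smul, norm_smul, hne, mul_one]
  have hgsupp : HasCompactSupport g :=
    husupp.comp_isClosedEmbedding hiso.isClosedEmbedding
  have hg'c : Continuous (deriv g) := hgc.continuous_deriv (by simp)
  have hg'supp : HasCompactSupport (deriv g) := hgsupp.deriv
  have hgderiv : ∀ t, HasDerivAt g (deriv g t) t := fun t =>
    ((hgc.differentiable (by simp)) t).hasDerivAt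
  have key1 : ∀ t : ℝ, g t = w |t| := by
    intro t
    rw [hg]
    simp only [hw, norm_smul, hne, mul_one, Real.norm_eq_abs]
  have hr0 : 0 < ‖x‖ := norm_pos_iff.2 hx
  set r : ℝ := ‖x‖ with hrdef
  have hux : u x = g r := by rw [hw, key1, abs_of_pos hr0]
  -- pointwise bound on the radial derivative
  have key3 : ∀ y : EuclideanSpace ℝ (Fin N), y ≠ 0 → |deriv g ‖y‖| ≤ ‖fderiv ℝ u y‖ := by
    intro y hy
    have hyn : ‖y‖ ≠ 0 := norm_ne_zero_iff.2 hy
    set v := ‖y‖⁻¹ • y with hv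
    have hnv : ‖v‖ = 1 := by
      rw [hv, norm_smul, norm_inv, norm_norm, inv_mul_cancel₀ hyn]
    have hφ : (fun t : ℝ => u (t • v)) = g := by
      funext t
      rw [key1, hw, norm_smul, hnv, mul_one, Real.norm_eq_abs]
    have hder : HasDerivAt (fun t : ℝ => u (t • v)) (fderiv ℝ u y v) ‖y‖ := by
      have h1 : HasDerivAt (fun t : ℝ => t • v) v ‖y‖ := by
        simpa using (hasDerivAt_id (‖y‖ : ℝ)).smul_const v
      have h2 := (hudiff (‖y‖ • v)).hasFDerivAt.comp_hasDerivAt ‖y‖ h1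
      rw [hv, smul_inv_smul₀ hyn] at h2
      exact h2
    rw [hφ] at hder
    rw [hder.deriv]
    calc |fderiv ℝ u y v| ≤ ‖fderiv ℝ u y‖ * ‖v‖ := (fderiv ℝ u y).le_opNorm v
      _ = ‖fderiv ℝ u y‖ := by rw [hnv, mul_one]
  -- the gradient integral
  set I : ℝ := ∫ y : EuclideanSpace ℝ (Fin N), ‖fderiv ℝ u y‖ ^ 2 with hI
  have hI0 : 0 ≤ I := integral_nonneg fun y => sq_nonneg _
  have hIint : Integrable (fun y : EuclideanSpace ℝ (Fin N) => ‖fderiv ℝ u y‖ ^ 2) := by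
    refine Continuous.integrable_of_hasCompactSupport
      (((hu.continuous_fderiv (by simp)).norm).pow 2) ?_
    exact HasCompactSupport.intro (husupp.fderiv (𝕜 := ℝ)) fun y hy => by
      simp [image_eq_zero_of_notMem_tsupport hy]
  -- the auxiliary one-dimensional functions
  set P : ℝ → ℝ := fun s => s ^ (N - 1) * deriv g s ^ 2 with hP
  set F : ℝ → ℝ := fun s => |deriv g s| * Real.sqrt (s ^ (N - 1)) with hF
  set G : ℝ → ℝ := fun s => (Real.sqrt (s ^ (N - 1)))⁻¹ with hG
  have hPc : Continuous P := (continuous_pow _).mul (hg'c.pow 2)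
  have hPsupp : HasCompactSupport P :=
    HasCompactSupport.intro hg'supp fun s hs => by
      simp [hP, image_eq_zero_of_notMem_tsupport hs]
  have hPint : Integrable P := hPc.integrable_of_hasCompactSupport hPsupp
  have hFc : Continuous F := hg'c.abs.mul (continuous_pow _).sqrt
  have hFsupp : HasCompactSupport F :=
    HasCompactSupport.intro hg'supp fun s hs => by
      simp [hF, image_eq_zero_of_notMem_tsupport hs]
  have h2e : ENNReal.ofReal (2 : ℝ) = 2 := by norm_num
  have hFmem : MemLp F (ENNReal.ofReal 2) (volume.restrict (Ioi r)) := by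
    rw [h2e]; exact (hFc.memLp_of_hasCompactSupport hFsupp).restrict _
  have hG2eq : EqOn (fun s : ℝ => s ^ ((1 : ℝ) - N)) (fun s => G s ^ 2) (Ioi r) := by
    intro s hs
    have hs0 : (0 : ℝ) < s := hr0.trans hs
    have hcast : ((N - 1 : ℕ) : ℝ) = (N : ℝ) - 1 := by
      push_cast [Nat.cast_sub (by omega : 1 ≤ N)]; ring
    simp only [hG]
    rw [inv_pow, Real.sq_sqrt (pow_nonneg hs0.le _), show (1 : ℝ) - N = -((N : ℝ) - 1) by ring,
      Real.rpow_neg hs0.le, ← hcast, Real.rpow_natCast]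
  have hG2int : IntegrableOn (fun s => G s ^ 2) (Ioi r) :=
    (integrableOn_Ioi_rpow_of_lt (by linarith : (1 : ℝ) - N < -1) hr0).congr_fun hG2eq
      measurableSet_Ioi
  have hGmem : MemLp G (ENNReal.ofReal 2) (volume.restrict (Ioi r)) := by
    rw [h2e]
    exact (memLp_two_iff_integrable_sq
      ((continuous_pow (N - 1)).sqrt.measurable.inv).aestronglyMeasurable).2 hG2int
  -- fundamental theorem of calculus
  have htend : Tendsto g atTop (nhds 0) := by
    obtain ⟨R, hR⟩ := hgsupp.isBounded.subset_closedBall 0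
    refine Tendsto.congr' ?_ tendsto_const_nhds
    filter_upwards [eventually_gt_atTop R] with t ht
    refine (image_eq_zero_of_notMem_tsupport fun hmem => ?_).symm
    have := hR hmem
    rw [mem_closedBall, dist_zero_right, Real.norm_eq_abs] at this
    have := le_abs_self t
    linarith
  have hFTC : ∫ s in Ioi r, deriv g s = 0 - g r :=
    integral_Ioi_of_hasDerivAt_of_tendsto' (fun s _ => hgderiv s)
      (hg'c.integrable_of_hasCompactSupport hg'supp).integrableOn htend
  -- Cauchy-Schwarz
  have hCS := integral_mul_le_Lp_mul_Lq_of_nonneg (μ := volume.restrict (Ioi r))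
    Real.HolderConjugate.two_two
    (Eventually.of_forall fun s => mul_nonneg (abs_nonneg _) (Real.sqrt_nonneg _))
    (Eventually.of_forall fun s => inv_nonneg.2 (Real.sqrt_nonneg _)) hFmem hGmem
  have hrpow2 : ∀ f : ℝ → ℝ, ∫ s in Ioi r, f s ^ (2 : ℝ) = ∫ s in Ioi r, f s ^ 2 := by
    intro f
    refine integral_congr_ae (Eventually.of_forall fun s => ?_)
    show f s ^ (2 : ℝ) = f s ^ (2 : ℕ)
    rw [← Real.rpow_natCast (f s) 2]; norm_num
  rw [hrpow2, hrpow2, ← Real.sqrt_eq_rpow, ← Real.sqrt_eq_rpow] at hCS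
  -- identify ∫ F² with ∫ P on (r, ∞)
  have hF2P : ∫ s in Ioi r, F s ^ 2 = ∫ s in Ioi r, P s := by
    refine setIntegral_congr_fun measurableSet_Ioi fun s hs => ?_
    have hs0 : (0 : ℝ) < s := hr0.trans hs
    simp only [hF, hP]
    rw [mul_pow, sq_abs, Real.sq_sqrt (pow_nonneg hs0.le _)]
    ring
  -- compare with the full line integral and the gradient integral
  have hPnonneg : 0 ≤ᵐ[volume.restrict (Ioi (0 : ℝ))] P :=
    (ae_restrict_iff' measurableSet_Ioi).2 (Eventually.of_forall fun s hs =>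
      mul_nonneg (pow_nonneg (le_of_lt hs) _) (sq_nonneg _))
  have hPmono : ∫ s in Ioi r, P s ≤ ∫ s in Ioi 0, P s :=
    setIntegral_mono_set hPint.integrableOn hPnonneg
      (HasSubset.Subset.eventuallyLE (Ioi_subset_Ioi hr0.le))
  have hsph := MeasureTheory.integral_fun_norm_addHaar
    (volume : Measure (EuclideanSpace ℝ (Fin N))) (fun s => deriv g s ^ 2)
  rw [finrank_euclideanSpace_fin] at hsph
  have hωP : ω * ∫ s in Ioi 0, P s = ∫ y : EuclideanSpace ℝ (Fin N), deriv g ‖y‖ ^ 2 := by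
    rw [hsph, nsmul_eq_mul, smul_eq_mul]
    simp only [smul_eq_mul, hω, hP]
    rw [hvb, ← measureReal_def]
    ring
  have h0ae : ∀ᵐ y : EuclideanSpace ℝ (Fin N), y ≠ 0 := by
    refine ae_iff.2 ?_
    simpa [not_not] using measure_singleton (0 : EuclideanSpace ℝ (Fin N))
  have hJI : ∫ y : EuclideanSpace ℝ (Fin N), deriv g ‖y‖ ^ 2 ≤ I := by
    refine integral_mono_of_nonneg (Eventually.of_forall fun y => sq_nonneg _) hIint ?_
    filter_upwards [h0ae] with y hy
    calc deriv g ‖y‖ ^ 2 = |deriv g ‖y‖| ^ 2 := (sq_abs _).symm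
      _ ≤ ‖fderiv ℝ u y‖ ^ 2 := pow_le_pow_left₀ (abs_nonneg _) (key3 y hy) 2
  have hA : ∫ s in Ioi r, F s ^ 2 ≤ ω⁻¹ * I := by
    rw [hF2P]
    refine hPmono.trans ?_
    rw [← mul_le_mul_iff_right₀ hωpos, ← mul_assoc, mul_inv_cancel₀ hωpos.ne', one_mul, hωP]
    exact hJI
  -- value of ∫ G²
  have hGval : ∫ s in Ioi r, G s ^ 2 = r ^ (-((N : ℝ) - 2)) / ((N : ℝ) - 2) := by
    rw [← setIntegral_congr_fun measurableSet_Ioi hG2eq,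
      integral_Ioi_rpow_of_lt (by linarith : (1 : ℝ) - N < -1) hr0,
      show (1 : ℝ) - N + 1 = -((N : ℝ) - 2) by ring]
    rw [neg_div_neg_eq]
  -- final assembly
  have hCS' : ∫ s in Ioi r, F s * G s ≤
      Real.sqrt (∫ s in Ioi r, F s ^ 2) * Real.sqrt (∫ s in Ioi r, G s ^ 2) := hCS
  have hFG : EqOn (fun s => |deriv g s|) (fun s => F s * G s) (Ioi r) := by
    intro s hs
    have hs0 : (0 : ℝ) < s := hr0.trans hs
    have hsqne : Real.sqrt (s ^ (N - 1)) ≠ 0 := ne_of_gt (Real.sqrt_pos.2 (pow_pos hs0 _))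
    simp only [hF, hG]
    rw [mul_assoc, mul_inv_cancel₀ hsqne, mul_one]
  have habs : |g r| ≤ ∫ s in Ioi r, |deriv g s| := by
    have h1 : |g r| = |∫ s in Ioi r, deriv g s| := by rw [hFTC, zero_sub, abs_neg]
    rw [h1]
    simpa [Real.norm_eq_abs] using
      norm_integral_le_integral_norm (μ := volume.restrict (Ioi r)) (deriv g)
  have hsq1 : Real.sqrt (∫ s in Ioi r, F s ^ 2) ≤ Real.sqrt ω⁻¹ * Real.sqrt I := by
    rw [← Real.sqrt_mul (by positivity : (0:ℝ) ≤ ω⁻¹) I]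
    exact Real.sqrt_le_sqrt hA
  have hsq2 : Real.sqrt (∫ s in Ioi r, G s ^ 2) =
      Real.sqrt ((N : ℝ) - 2)⁻¹ * r ^ (-((N : ℝ) - 2) / 2) := by
    rw [hGval, div_eq_mul_inv, mul_comm,
      Real.sqrt_mul (inv_nonneg.2 (by linarith : (0:ℝ) ≤ (N : ℝ) - 2))]
    congr 1
    rw [Real.sqrt_eq_rpow, ← Real.rpow_mul hr0.le]
    congr 1
    ring
  calc |u x| = |g r| := by rw [hux]
    _ ≤ ∫ s in Ioi r, |deriv g s| := habs
    _ = ∫ s in Ioi r, F s * G s := setIntegral_congr_fun measurableSet_Ioi hFG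
    _ ≤ Real.sqrt (∫ s in Ioi r, F s ^ 2) * Real.sqrt (∫ s in Ioi r, G s ^ 2) := hCS'
    _ ≤ (Real.sqrt ω⁻¹ * Real.sqrt I) * Real.sqrt (∫ s in Ioi r, G s ^ 2) :=
        mul_le_mul_of_nonneg_right hsq1 (Real.sqrt_nonneg _)
    _ = (Real.sqrt ω⁻¹ * Real.sqrt I) *
        (Real.sqrt ((N : ℝ) - 2)⁻¹ * r ^ (-((N : ℝ) - 2) / 2)) := by rw [hsq2]
    _ = Real.sqrt (ω * ((N : ℝ) - 2))⁻¹ * Real.sqrt I * r ^ (-((N : ℝ) - 2) / 2) := by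
        have hsp : Real.sqrt (ω * ((N : ℝ) - 2))⁻¹ =
            Real.sqrt ω⁻¹ * Real.sqrt ((N : ℝ) - 2)⁻¹ := by
          rw [mul_inv, Real.sqrt_mul (inv_nonneg.2 hωpos.le)]
        rw [hsp]
        ring
end

section
/- For n ∈ ℕ let e_n : [0,∞) → ℝ denote the n-fold iterate of the exponential map (e_0(r) = r, e_{n+1}(r) = exp(e_n(r))), and define α : [0,∞) → ℝ by α(r) := e_n(n) whenever n ≤ r < n+1 (n ∈ ℕ). Then for every n ∈ ℕ, lim_{r→+∞} α(r)/e_n(r) = +∞. -/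
open Filter

lemma self_le_iter (n : ℕ) (x : ℝ) : x ≤ Real.exp^[n] x := by
  induction n with
  | zero => simp
  | succ k ih =>
    rw [Function.iterate_succ_apply']
    have := Real.add_one_le_exp (Real.exp^[k] x)
    linarith

lemma iter_mono (n : ℕ) : Monotone (Real.exp^[n]) :=
  Real.exp_monotone.iterate n

lemma iter_shift (n : ℕ) (x c : ℝ) (hx : 0 ≤ x) (hc : 0 ≤ c) :
    Real.exp c * Real.exp^[n + 1] x ≤ Real.exp^[n + 1] (x + c) := by
  induction n with
  | zero => simp [Real.exp_add, mul_comm]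
  | succ k ih =>
    rw [Function.iterate_succ_apply' Real.exp (k+1) (x + c),
        Function.iterate_succ_apply' Real.exp (k+1) x]
    have hA : (1 : ℝ) ≤ Real.exp^[k + 1] x := by
      rw [Function.iterate_succ_apply]
      calc (1 : ℝ) ≤ Real.exp x := Real.one_le_exp hx
        _ ≤ Real.exp^[k] (Real.exp x) := self_le_iter k _
    have h1 : c + Real.exp^[k + 1] x ≤ Real.exp c * Real.exp^[k + 1] x := by
      have := Real.add_one_le_exp c
      nlinarith
    calc Real.exp c * Real.exp (Real.exp^[k + 1] x)
        = Real.exp (c + Real.exp^[k + 1] x) := by rw [Real.exp_add]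
      _ ≤ Real.exp (Real.exp c * Real.exp^[k + 1] x) := Real.exp_le_exp.2 h1
      _ ≤ Real.exp (Real.exp^[k + 1] (x + c)) := Real.exp_le_exp.2 ih

lemma aux_main (α : ℝ → ℝ)
    (hα : ∀ (n : ℕ) (r : ℝ), (n : ℝ) ≤ r → r < (n : ℝ) + 1 →
      α r = Real.exp^[n] (n : ℝ)) (n : ℕ) :
    Filter.Tendsto (fun r : ℝ => α r / Real.exp^[n + 1] r)
      Filter.atTop Filter.atTop := by
  rw [tendsto_atTop]
  intro b
  set B : ℝ := max b 1 with hB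
  have hB1 : (1 : ℝ) ≤ B := le_max_right _ _
  have hbB : b ≤ B := le_max_left _ _
  set L : ℝ := Real.log B with hL
  have hL0 : 0 ≤ L := Real.log_nonneg hB1
  filter_upwards [eventually_ge_atTop (max ((n : ℝ) + 2) (2 * L + 3))] with r hr
  have hr1 : (n : ℝ) + 2 ≤ r := le_trans (le_max_left _ _) hr
  have hr2 : 2 * L + 3 ≤ r := le_trans (le_max_right _ _) hr
  have hr0 : (0 : ℝ) ≤ r := by
    have : (0 : ℝ) ≤ (n : ℝ) + 2 := by positivity
    linarith
  set m := ⌊r⌋₊ with hm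
  have hm1 : (m : ℝ) ≤ r := Nat.floor_le hr0
  have hm2 : r < (m : ℝ) + 1 := Nat.lt_floor_add_one r
  have hαr : α r = Real.exp^[m] (m : ℝ) := hα m r hm1 hm2
  have hmn : n + 2 ≤ m := by
    have h1 : (n : ℝ) + 1 < (m : ℝ) := by linarith
    have h2 : n + 1 < m := by exact_mod_cast h1
    omega
  obtain ⟨j, hj⟩ : ∃ j, m = (n + 1) + (j + 1) := ⟨m - n - 2, by omega⟩
  have key1 : Real.exp^[m] (m : ℝ)
      = Real.exp^[n + 1] (Real.exp^[j + 1] (m : ℝ)) := by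
    rw [hj, Function.iterate_add_apply]
  have hkm : Real.exp (m : ℝ) ≤ Real.exp^[j + 1] (m : ℝ) := by
    rw [Function.iterate_succ_apply]
    exact self_le_iter j _
  have hmL : 2 * L + 2 < (m : ℝ) := by linarith
  have hexpm : r + L ≤ Real.exp (m : ℝ) := by
    have h1 : (m : ℝ) / 2 + 1 ≤ Real.exp ((m : ℝ) / 2) :=
      Real.add_one_le_exp _
    have h2 : Real.exp ((m : ℝ) / 2) * Real.exp ((m : ℝ) / 2)
        = Real.exp (m : ℝ) := by rw [← Real.exp_add]; ring_nf
    nlinarith [Real.exp_pos ((m : ℝ) / 2)]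
  have hmono : Real.exp^[n + 1] (r + L)
      ≤ Real.exp^[n + 1] (Real.exp^[j + 1] (m : ℝ)) :=
    iter_mono (n + 1) (by linarith)
  have hshift : B * Real.exp^[n + 1] r ≤ Real.exp^[n + 1] (r + L) := by
    have hBpos : (0 : ℝ) < B := by linarith
    have := iter_shift n r L hr0 hL0
    rwa [hL, Real.exp_log hBpos] at this
  have hpos : 0 < Real.exp^[n + 1] r :=
    lt_of_lt_of_le (by linarith : (0 : ℝ) < r) (self_le_iter _ r)
  rw [le_div_iff₀ hpos]
  calc b * Real.exp^[n + 1] r ≤ B * Real.exp^[n + 1] r := by nlinarith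
    _ ≤ Real.exp^[n + 1] (r + L) := hshift
    _ ≤ Real.exp^[n + 1] (Real.exp^[j + 1] (m : ℝ)) := hmono
    _ = α r := by rw [hαr, key1]

theorem step_function_beats_iterated_exp
    (α : ℝ → ℝ)
    (hα : ∀ (n : ℕ) (r : ℝ), (n : ℝ) ≤ r → r < (n : ℝ) + 1 →
      α r = Real.exp^[n] (n : ℝ)) :
    ∀ n : ℕ, Filter.Tendsto (fun r : ℝ => α r / Real.exp^[n] r)
      Filter.atTop Filter.atTop := by
  intro n
  cases n with
  | succ k => exact aux_main α hα k
  | zero =>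
    apply tendsto_atTop_mono' atTop _ (aux_main α hα 0)
    filter_upwards [eventually_ge_atTop (1 : ℝ)] with r hr
    simp only [zero_add, Function.iterate_one, Function.iterate_zero, id]
    have hα0 : 0 ≤ α r := by
      rw [hα ⌊r⌋₊ r (Nat.floor_le (by linarith)) (Nat.lt_floor_add_one r)]
      exact le_trans (Nat.cast_nonneg _) (self_le_iter _ _)
    have hre : r ≤ Real.exp r := by linarith [Real.add_one_le_exp r]
    have hr0 : (0 : ℝ) < r := by linarith
    gcongr
end

section
/- Let f : ℝ → ℝ be continuous and set F(t) := ∫_0^t f(s) ds. Suppose there exist θ > 2 and t₀ > 0 such that 0 < θ F(t) ≤ f(t) t for all t ≥ t₀. Then F(t) ≥ (F(t₀)/t₀^θ) · t^θ for all t ≥ t₀. -/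
open Set

/-- The quotient `F x / x ^ θ` has derivative `(x F'(x) - θ F(x)) x ^ (θ - 1) / x ^ (2θ) ≥ 0`. -/
theorem monotoneOn_div_rpow_of_mul_le_mul_deriv {F f : ℝ → ℝ} {θ a : ℝ} (ha : 0 < a)
    (hF : ∀ x ∈ Ici a, HasDerivAt F (f x) x) (h : ∀ x ∈ Ioi a, θ * F x ≤ f x * x) :
    MonotoneOn (fun x => F x / x ^ θ) (Ici a) := by
  have hquot : ∀ x ∈ Ici a, HasDerivAt (fun x => F x / x ^ θ)
      ((f x * x ^ θ - F x * (θ * x ^ (θ - 1))) / (x ^ θ) ^ 2) x := fun x hx =>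
    have hx0 : 0 < x := ha.trans_le hx
    (hF x hx).div (Real.hasDerivAt_rpow_const (Or.inl hx0.ne')) (Real.rpow_pos_of_pos hx0 θ).ne'
  refine monotoneOn_of_hasDerivWithinAt_nonneg (convex_Ici a)
    (fun x hx => (hquot x hx).continuousAt.continuousWithinAt)
    (fun x hx => (hquot x (interior_subset hx)).hasDerivWithinAt) fun x hx => ?_
  rw [interior_Ici] at hx
  have hx0 : 0 < x := ha.trans hx
  have hnum : f x * x ^ θ - F x * (θ * x ^ (θ - 1)) = (f x * x - θ * F x) * x ^ (θ - 1) := by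
    rw [Real.rpow_sub_one hx0.ne']
    field_simp
  have hgap : 0 ≤ f x * x - θ * F x := sub_nonneg.mpr (h x hx)
  rw [hnum]
  exact div_nonneg (mul_nonneg hgap (Real.rpow_nonneg hx0.le _)) (sq_nonneg _)

theorem div_rpow_mul_rpow_le_of_mul_le_mul_deriv {F f : ℝ → ℝ} {θ a : ℝ} (ha : 0 < a)
    (hF : ∀ x ∈ Ici a, HasDerivAt F (f x) x) (h : ∀ x ∈ Ioi a, θ * F x ≤ f x * x)
    {t : ℝ} (ht : a ≤ t) :
    F a / a ^ θ * t ^ θ ≤ F t := by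
  have hmono := monotoneOn_div_rpow_of_mul_le_mul_deriv ha hF h self_mem_Ici ht ht
  exact (le_div_iff₀ (Real.rpow_pos_of_pos (ha.trans_le ht) θ)).mp hmono

theorem superlinear_growth_of_primitive_general (f : ℝ → ℝ) (hf : Continuous f)
    (θ t₀ : ℝ) (ht₀ : 0 < t₀)
    (h : ∀ t : ℝ, t₀ ≤ t →
      0 < θ * (∫ s in (0 : ℝ)..t, f s) ∧ θ * (∫ s in (0 : ℝ)..t, f s) ≤ f t * t) :
    ∀ t : ℝ, t₀ ≤ t →
      ((∫ s in (0 : ℝ)..t₀, f s) / t₀ ^ θ) * t ^ θ ≤ ∫ s in (0 : ℝ)..t, f s :=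
  fun _ ht => div_rpow_mul_rpow_le_of_mul_le_mul_deriv ht₀
    (fun x _ => (hf.integral_hasStrictDerivAt 0 x).hasDerivAt)
    (fun x hx => (h x hx.le).2) ht

theorem superlinear_growth_of_primitive (f : ℝ → ℝ) (hf : Continuous f)
    (θ t₀ : ℝ) (hθ : 2 < θ) (ht₀ : 0 < t₀)
    (h : ∀ t : ℝ, t₀ ≤ t →
      0 < θ * (∫ s in (0 : ℝ)..t, f s) ∧ θ * (∫ s in (0 : ℝ)..t, f s) ≤ f t * t) :
    ∀ t : ℝ, t₀ ≤ t →
      ((∫ s in (0 : ℝ)..t₀, f s) / t₀ ^ θ) * t ^ θ ≤ ∫ s in (0 : ℝ)..t, f s :=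
  superlinear_growth_of_primitive_general f hf θ t₀ ht₀ h
end
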